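/- For 0 ≤ i ≤ d, both (𝓜 − q^{d−2i}I)U_i ⊆ U_0 + U_1 + ⋯ + U_{i−1} and (𝓜 − q^{d−2i}I)U_i^↓ ⊆ U_0^↓ + U_1^↓ + ⋯ + U_{i−1}^↓. -/

import Mathlib

/-!
Write `P_c = (1 - c ψ)⁻¹`. The identity `(1 - a q ψ) P_{a⁻¹q} = 1 - (a - a⁻¹) q ψ P_{a⁻¹q}` collapses
the definition of `𝓜` to `𝓜 = P_{a⁻¹q} K`, and then `B = (1 - a q ψ) 𝓜` gives `𝓜 = P_{aq} B`.
So on either eigenspace, `𝓜 - λ` acts as `λ (P_c - 1) = λ c ψ P_c`. Since `ψ` is nilpotent, `P_c`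
is a polynomial in `ψ` and preserves the flag `U_0 + ⋯ + U_i`, which `ψ` maps into
`U_0 + ⋯ + U_{i-1}`.
-/

open Finset

section InverseOneSub

variable {A : Type*} [Ring A]

theorem inverse_one_sub_eq_geom_sum {x : A} {n : ℕ} (hx : x ^ n = 0) :
    Ring.inverse (1 - x) = ∑ k ∈ range n, x ^ k := by
  rw [← mul_one (Ring.inverse _),
    Ring.inverse_mul_eq_iff_eq_mul _ _ _ (IsNilpotent.isUnit_one_sub ⟨n, hx⟩), mul_neg_geom_sum,
    hx, sub_zero]

theorem inverse_one_sub_eq_one_add_mul {x : A} (hx : IsUnit (1 - x)) :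
    Ring.inverse (1 - x) = 1 + x * Ring.inverse (1 - x) := by
  have h := Ring.mul_inverse_cancel _ hx
  rw [sub_mul, one_mul] at h
  exact sub_eq_iff_eq_add.mp h

variable {𝕂 : Type*} [Field 𝕂] [Algebra 𝕂 A]

theorem inv_sub_inv_smul_sub_eq_inverse_mul {a : 𝕂} (ha : a - a⁻¹ ≠ 0) (q : 𝕂) {ψ : A}
    (hψ : IsUnit (1 - (a⁻¹ * q) • ψ)) (K : A) :
    (a - a⁻¹)⁻¹ • (a • K - a⁻¹ • ((1 - (a * q) • ψ) * Ring.inverse (1 - (a⁻¹ * q) • ψ) * K))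
      = Ring.inverse (1 - (a⁻¹ * q) • ψ) * K := by
  set P := Ring.inverse (1 - (a⁻¹ * q) • ψ)
  have hP : P = 1 + (a⁻¹ * q) • ψ * P := inverse_one_sub_eq_one_add_mul hψ
  have hBP : (1 - (a * q) • ψ) * P = 1 + (a⁻¹ * q - a * q) • (ψ * P) := by
    rw [sub_mul, one_mul, sub_smul, smul_mul_assoc]
    nth_rewrite 1 [hP]
    rw [smul_mul_assoc]
    abel
  have hPK : P * K = K + (a⁻¹ * q) • (ψ * P * K) := by
    nth_rewrite 1 [hP]
    rw [add_mul, one_mul, smul_mul_assoc, smul_mul_assoc]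
  rw [hBP, add_mul, one_mul, smul_mul_assoc, hPK]
  match_scalars
  · linear_combination inv_mul_cancel₀ ha
  · linear_combination a⁻¹ * q * inv_mul_cancel₀ ha

end InverseOneSub

section Flag

variable {R V : Type*} [CommRing R] [AddCommGroup V] [Module R V]
  {ψ : Module.End R V} {W : ℕ → Submodule R V}

theorem Submodule.le_comap_inverse_one_sub_smul (hψ : IsNilpotent ψ) (c : R)
    {p : Submodule R V} (hp : p ≤ p.comap ψ) :
    p ≤ p.comap (Ring.inverse (1 - c • ψ)) := by
  obtain ⟨n, hn⟩ := hψ.smul c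
  have hp' : p ≤ p.comap (c • ψ) := fun v hv => p.smul_mem c (hp hv)
  intro v hv
  rw [inverse_one_sub_eq_geom_sum hn, Submodule.mem_comap, LinearMap.sum_apply]
  exact p.sum_mem fun k _ => p.le_comap_pow_of_le_comap hp' k hv

theorem sum_range_le_sum_range_succ (i : ℕ) : ∑ k ∈ range i, W k ≤ ∑ k ∈ range (i + 1), W k :=
  sum_le_sum_of_subset (range_subset_range.2 i.le_succ)

theorem le_comap_sum_range_of_lowering {d : ℕ} (h0 : ∀ v ∈ W 0, ψ v = 0)
    (hW : ∀ i, 1 ≤ i → i ≤ d → ∀ v ∈ W i, ψ v ∈ W (i - 1)) {j : ℕ} (hj : j ≤ d) :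
    W j ≤ (∑ k ∈ range j, W k).comap ψ := by
  intro v hv
  rcases j with _ | j
  · simp [h0 v hv]
  · exact single_le_sum (f := W) (fun _ _ => zero_le) (self_mem_range_succ j)
      (hW (j + 1) le_add_self hj v hv)

theorem sum_range_succ_le_comap {i : ℕ} (hψW : ∀ j ≤ i, W j ≤ (∑ k ∈ range j, W k).comap ψ) :
    ∑ k ∈ range (i + 1), W k ≤ (∑ k ∈ range i, W k).comap ψ := by
  induction i with
  | zero => simpa using hψW 0 le_rfl
  | succ i ih =>
    rw [sum_range_succ, Submodule.add_eq_sup]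
    exact sup_le ((ih fun j hj => hψW j (hj.trans i.le_succ)).trans
      (Submodule.comap_mono (sum_range_le_sum_range_succ i))) (hψW (i + 1) le_rfl)

theorem map_inverse_one_sub_smul_mul_sub_le {T : Module.End R V} (hψ : IsNilpotent ψ)
    (c μ : R) {i : ℕ} (hψW : ∀ j ≤ i, W j ≤ (∑ k ∈ range j, W k).comap ψ)
    (hT : ∀ v ∈ W i, T v = μ • v) :
    (W i).map (Ring.inverse (1 - c • ψ) * T - μ • 1) ≤ ∑ k ∈ range i, W k := by
  rintro _ ⟨v, hv, rfl⟩
  set P := Ring.inverse (1 - c • ψ)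
  have hP : P = 1 + c • ψ * P := inverse_one_sub_eq_one_add_mul (hψ.smul c).isUnit_one_sub
  have hflag := sum_range_succ_le_comap hψW
  have hPv : P v ∈ ∑ k ∈ range (i + 1), W k :=
    Submodule.le_comap_inverse_one_sub_smul hψ c
      (hflag.trans (Submodule.comap_mono (sum_range_le_sum_range_succ i)))
      (single_le_sum (f := W) (fun _ _ => zero_le) (self_mem_range_succ i) hv)
  have hMv : (P * T - μ • 1) v = (μ * c) • ψ (P v) := by
    calc (P * T - μ • 1) v = μ • (P v - v) := by
          simp [Module.End.mul_apply, hT v hv, smul_sub]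
      _ = (μ * c) • ψ (P v) := by
          nth_rewrite 1 [hP]
          simp [Module.End.mul_apply, mul_smul]
  rw [hMv]
  exact Submodule.smul_mem _ _ (hflag hPv)

end Flag

theorem stmt_18_general
    {𝕂 : Type*} [Field 𝕂] {V : Type*} [AddCommGroup V] [Module 𝕂 V]
    (d : ℕ) (hd : 1 ≤ d) (q a : 𝕂) (ha : a ≠ 0)
    (ha2 : ∀ i : ℤ, 1 - (d : ℤ) ≤ i → i ≤ (d : ℤ) - 1 → a ^ 2 ≠ q ^ (2 * i))
    (K : Module.End 𝕂 V)
    (U : ℕ → Submodule 𝕂 V)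
    (hKU : ∀ i, i ≤ d → ∀ v ∈ U i, K v = (q ^ ((d : ℤ) - 2 * (i : ℤ))) • v)
    (ψ : Module.End 𝕂 V)
    (hψ0 : ∀ v ∈ U 0, ψ v = 0)
    (hψU : ∀ i, 1 ≤ i → i ≤ d → ∀ v ∈ U i, ψ v ∈ U (i - 1))
    (hψnil : ψ ^ (d + 1) = 0)
    (B : Module.End 𝕂 V)
    (hB : B = (1 - (a * q) • ψ) * Ring.inverse (1 - (a⁻¹ * q) • ψ) * K)
    (M : Module.End 𝕂 V)
    (hM : M = (a - a⁻¹)⁻¹ • (a • K - a⁻¹ • B))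
    (Ud : ℕ → Submodule 𝕂 V)
    (hBUd : ∀ i, i ≤ d → ∀ v ∈ Ud i, B v = (q ^ ((d : ℤ) - 2 * (i : ℤ))) • v)
    (hψ0d : ∀ v ∈ Ud 0, ψ v = 0)
    (hψUd : ∀ i, 1 ≤ i → i ≤ d → ∀ v ∈ Ud i, ψ v ∈ Ud (i - 1)):
    ∀ i, i ≤ d →
      Submodule.map (M - (q ^ ((d : ℤ) - 2 * (i : ℤ))) • 1) (U i)
        ≤ (∑ j ∈ Finset.range i, U j) ∧
      Submodule.map (M - (q ^ ((d : ℤ) - 2 * (i : ℤ))) • 1) (Ud i)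
        ≤ ∑ j ∈ Finset.range i, Ud j := by
  have hnil : IsNilpotent ψ := ⟨d + 1, hψnil⟩
  have hunit : ∀ c : 𝕂, IsUnit (1 - c • ψ) := fun c => (hnil.smul c).isUnit_one_sub
  have haa : a - a⁻¹ ≠ 0 := by
    have ha1 : a ^ 2 ≠ 1 := by simpa using ha2 0 (by omega) (by omega)
    contrapose! ha1
    field_simp at ha1
    linear_combination ha1
  have hMK : M = Ring.inverse (1 - (a⁻¹ * q) • ψ) * K := by
    rw [hM, hB, inv_sub_inv_smul_sub_eq_inverse_mul haa q (hunit _)]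
  have hMB : M = Ring.inverse (1 - (a * q) • ψ) * B := by
    rw [hMK, hB, mul_assoc, Ring.inverse_mul_cancel_left _ _ (hunit _)]
  intro i hi
  exact ⟨hMK ▸ map_inverse_one_sub_smul_mul_sub_le hnil _ _
      (fun j hj => le_comap_sum_range_of_lowering hψ0 hψU (hj.trans hi)) (hKU i hi),
    hMB ▸ map_inverse_one_sub_smul_mul_sub_le hnil _ _
      (fun j hj => le_comap_sum_range_of_lowering hψ0d hψUd (hj.trans hi)) (hBUd i hi)⟩

theorem stmt_18
    {𝕂 : Type*} [Field 𝕂] {V : Type*} [AddCommGroup V] [Module 𝕂 V]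
    [FiniteDimensional 𝕂 V]
    (d : ℕ) (hd : 1 ≤ d) (q a : 𝕂) (hq : q ≠ 0) (ha : a ≠ 0)
    (hq2 : ∀ i : ℕ, 1 ≤ i → i ≤ d → q ^ (2 * i) ≠ 1)
    (ha2 : ∀ i : ℤ, 1 - (d : ℤ) ≤ i → i ≤ (d : ℤ) - 1 → a ^ 2 ≠ q ^ (2 * i))
    (K : Module.End 𝕂 V) (hK : IsUnit K)
    (U : ℕ → Submodule 𝕂 V)
    (hUne : ∀ i, i ≤ d → U i ≠ ⊥)
    (hUint : DirectSum.IsInternal (fun i : Fin (d + 1) => U i.1))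
    (hKU : ∀ i, i ≤ d → ∀ v ∈ U i, K v = (q ^ ((d : ℤ) - 2 * (i : ℤ))) • v)
    (ψ : Module.End 𝕂 V)
    (hψ0 : ∀ v ∈ U 0, ψ v = 0)
    (hψU : ∀ i, 1 ≤ i → i ≤ d → ∀ v ∈ U i, ψ v ∈ U (i - 1))
    (hψnil : ψ ^ (d + 1) = 0)
    (hKψ : K * ψ = q ^ 2 • (ψ * K))
    (hinv : ∀ x : 𝕂, IsUnit (1 - x • ψ))
    (B : Module.End 𝕂 V)
    (hB : B = (1 - (a * q) • ψ) * Ring.inverse (1 - (a⁻¹ * q) • ψ) * K)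
    (M : Module.End 𝕂 V)
    (hM : M = (a - a⁻¹)⁻¹ • (a • K - a⁻¹ • B))
    (hMunit : IsUnit M)
    (Ud : ℕ → Submodule 𝕂 V)
    (hUdne : ∀ i, i ≤ d → Ud i ≠ ⊥)
    (hUdint : DirectSum.IsInternal (fun i : Fin (d + 1) => Ud i.1))
    (hBUd : ∀ i, i ≤ d → ∀ v ∈ Ud i, B v = (q ^ ((d : ℤ) - 2 * (i : ℤ))) • v)
    (hψ0d : ∀ v ∈ Ud 0, ψ v = 0)
    (hψUd : ∀ i, 1 ≤ i → i ≤ d → ∀ v ∈ Ud i, ψ v ∈ Ud (i - 1)):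
    ∀ i, i ≤ d →
      Submodule.map (M - (q ^ ((d : ℤ) - 2 * (i : ℤ))) • 1) (U i)
        ≤ (∑ j ∈ Finset.range i, U j) ∧
      Submodule.map (M - (q ^ ((d : ℤ) - 2 * (i : ℤ))) • 1) (Ud i)
        ≤ ∑ j ∈ Finset.range i, Ud j :=
  stmt_18_general d hd q a ha ha2 K U hKU ψ hψ0 hψU hψnil B hB M hM Ud hBUd hψ0d hψUd
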